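/- Every complex nonzero vector v ∈ ℂ^m with v·v = 0 (sum of squares of components, no conjugation) can be mapped by a real orthogonal transformation R ∈ O(m) and a positive scalar to the vector e₁ + i·e₂; equivalently, there exists R ∈ O(m) and λ > 0 with R v = λ(e₁ + i e₂). -/

import Mathlib

/-!
Write `v = a + i b` with `a, b` real. The isotropy `v · v = 0` says exactly that `a` and `b` are
orthogonal of the same length `λ`, and `λ > 0` since `v ≠ 0`. So `a / λ, b / λ` is an orthonormal
pair; extending it to an orthonormal basis of `ℝ^m` and taking that basis as the rows of `R` gives
`R a = λ e₁` and `R b = λ e₂`.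
-/

open Matrix

open Complex

variable {ι : Type*}

noncomputable def reVec (v : ι → ℂ) : EuclideanSpace ℝ ι := WithLp.toLp 2 fun j => (v j).re

noncomputable def imVec (v : ι → ℂ) : EuclideanSpace ℝ ι := WithLp.toLp 2 fun j => (v j).im

@[simp] lemma reVec_apply (v : ι → ℂ) (j : ι) : reVec v j = (v j).re := rfl

@[simp] lemma imVec_apply (v : ι → ℂ) (j : ι) : imVec v j = (v j).im := rfl

variable [Fintype ι]

lemma sum_mul_self_eq_norm_sq_sub_add_inner (v : ι → ℂ) :
    ∑ j, v j * v j = ((‖reVec v‖ ^ 2 - ‖imVec v‖ ^ 2 : ℝ) : ℂ)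
      + 2 * (inner ℝ (reVec v) (imVec v) : ℂ) * I := by
  simp only [EuclideanSpace.norm_sq_eq, PiLp.inner_apply, RCLike.inner_apply, conj_trivial,
    reVec_apply, imVec_apply, Real.norm_eq_abs, sq_abs]
  push_cast
  rw [← Finset.sum_sub_distrib, Finset.mul_sum, Finset.sum_mul, ← Finset.sum_add_distrib]
  refine Finset.sum_congr rfl fun j _ => ?_
  conv_lhs => rw [← re_add_im (v j)]
  linear_combination ((v j).im : ℂ) ^ 2 * I_sq

lemma norm_reVec_eq_and_inner_eq_zero_of_isotropic {v : ι → ℂ} (hv : ∑ j, v j * v j = 0) :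
    ‖reVec v‖ = ‖imVec v‖ ∧ inner ℝ (reVec v) (imVec v) = 0 := by
  rw [sum_mul_self_eq_norm_sq_sub_add_inner, Complex.ext_iff] at hv
  simp only [add_re, add_im, ofReal_re, ofReal_im, mul_re, mul_im, I_re, I_im, re_ofNat,
    im_ofNat] at hv
  norm_num at hv
  exact ⟨(sq_eq_sq₀ (norm_nonneg _) (norm_nonneg _)).1 (sub_eq_zero.1 hv.1), hv.2⟩

lemma map_ofReal_mulVec (R : Matrix ι ι ℝ) (v : ι → ℂ) :
    R.map ofReal *ᵥ v = fun k => ((R *ᵥ (reVec v).ofLp) k : ℂ) + (R *ᵥ (imVec v).ofLp) k * I := by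
  funext k
  simp only [mulVec, dotProduct, map_apply, ofReal_sum, ofReal_mul, Finset.sum_mul,
    ← Finset.sum_add_distrib]
  refine Finset.sum_congr rfl fun j _ => ?_
  rw [mul_assoc, ← mul_add]
  exact congrArg _ (re_add_im (v j)).symm

lemma exists_mem_orthogonalGroup_mulVec_eq_single [DecidableEq ι] {s : Set ι}
    {u : ι → EuclideanSpace ℝ ι} (hu : Orthonormal ℝ (s.domRestrict u)) :
    ∃ R ∈ orthogonalGroup ι ℝ, ∀ i ∈ s, R *ᵥ (u i).ofLp = Pi.single i 1 := by
  obtain ⟨b, hb⟩ := hu.exists_orthonormalBasis_extension_of_card_eq finrank_euclideanSpace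
  refine ⟨b.toBasis.toMatrix (EuclideanSpace.basisFun ι ℝ),
    b.toMatrix_orthonormalBasis_mem_orthogonal _, fun i hi => ?_⟩
  have := (EuclideanSpace.basisFun ι ℝ).toBasis.toMatrix_mulVec_repr b.toBasis (u i)
  rw [← hb i hi] at this ⊢
  have hrepr : ⇑((EuclideanSpace.basisFun ι ℝ).toBasis.repr (b i)) = (b i).ofLp := rfl
  have hself : b.toBasis.repr (b i) = Finsupp.single i 1 := by
    simpa using b.toBasis.repr_self i
  rwa [hrepr, hself, Finsupp.single_eq_pi_single] at this

lemma exists_mem_orthogonalGroup_mulVec_eq_norm_smul_single [DecidableEq ι] {i j : ι}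
    (hij : i ≠ j) {x y : EuclideanSpace ℝ ι} (hxy : inner ℝ x y = 0) (hnorm : ‖x‖ = ‖y‖) :
    ∃ R ∈ orthogonalGroup ι ℝ,
      R *ᵥ x.ofLp = ‖x‖ • Pi.single i 1 ∧ R *ᵥ y.ofLp = ‖x‖ • Pi.single j 1 := by
  rcases eq_or_ne ‖x‖ 0 with h0 | h0
  · have hx : x = 0 := norm_eq_zero.1 h0
    have hy : y = 0 := norm_eq_zero.1 (hnorm ▸ h0)
    exact ⟨1, one_mem _, by simp [hx, hy]⟩
  set u : ι → EuclideanSpace ℝ ι := fun k => ‖x‖⁻¹ • if k = i then x else y with hu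
  have hon : Orthonormal ℝ (({i, j} : Set ι).domRestrict u) := by
    rw [orthonormal_iff_ite]
    rintro ⟨k, rfl | rfl⟩ ⟨l, rfl | rfl⟩ <;>
      simp [hu, hij, hij.symm, Subtype.ext_iff, inner_smul_left, inner_smul_right, hxy,
        real_inner_comm x y, norm_smul, ← hnorm, h0]
  obtain ⟨R, hR, hRu⟩ := exists_mem_orthogonalGroup_mulVec_eq_single hon
  have hui := hRu i (by simp)
  have huj := hRu j (by simp)
  simp only [hu, ↓reduceIte, if_neg hij.symm, WithLp.ofLp_smul, mulVec_smul] at hui huj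
  refine ⟨R, hR, ?_, ?_⟩
  · rw [← hui, smul_inv_smul₀ h0]
  · rw [← huj, smul_inv_smul₀ h0]

theorem exists_mem_orthogonalGroup_map_ofReal_mulVec_eq [DecidableEq ι] {i j : ι} (hij : i ≠ j)
    {v : ι → ℂ} (hv0 : v ≠ 0) (hv : ∑ k, v k * v k = 0) :
    ∃ R ∈ orthogonalGroup ι ℝ, ∃ lam : ℝ, 0 < lam ∧
      R.map ofReal *ᵥ v = (lam : ℂ) • (Pi.single i 1 + I • Pi.single j 1) := by
  obtain ⟨hnorm, hinner⟩ := norm_reVec_eq_and_inner_eq_zero_of_isotropic hv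
  obtain ⟨R, hR, hre, him⟩ :=
    exists_mem_orthogonalGroup_mulVec_eq_norm_smul_single hij hinner hnorm
  have hpos : 0 < ‖reVec v‖ := by
    refine norm_pos_iff.2 fun hre0 => hv0 (funext fun k => Complex.ext ?_ ?_)
    · simpa using congrArg (fun w : EuclideanSpace ℝ ι => w k) hre0
    · have him0 : imVec v = 0 := norm_eq_zero.1 (hnorm ▸ norm_eq_zero.2 hre0)
      simpa using congrArg (fun w : EuclideanSpace ℝ ι => w k) him0
  refine ⟨R, hR, ‖reVec v‖, hpos, ?_⟩
  rw [map_ofReal_mulVec, hre, him]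
  funext k
  simp only [Pi.add_apply, Pi.smul_apply, Pi.single_apply, smul_eq_mul]
  split_ifs <;> push_cast <;> ring

theorem stmt4 (m : ℕ) (hm : 2 ≤ m) (v : Fin m → ℂ) (hv0 : v ≠ 0)
    (hnull : ∑ j, v j * v j = 0) :
    ∃ R : Matrix (Fin m) (Fin m) ℝ, Rᵀ * R = 1 ∧ ∃ lam : ℝ, 0 < lam ∧
      (R.map Complex.ofReal).mulVec v = fun i : Fin m =>
        (lam : ℂ) * ((if (i : ℕ) = 0 then 1 else 0) +
          Complex.I * (if (i : ℕ) = 1 then 1 else 0)) := by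
  obtain ⟨R, hR, lam, hlam, hRv⟩ := exists_mem_orthogonalGroup_map_ofReal_mulVec_eq
    (i := ⟨0, by omega⟩) (j := ⟨1, by omega⟩) (by simp [Fin.ext_iff]) hv0 hnull
  refine ⟨R, (mem_orthogonalGroup_iff' _ _).1 hR, lam, hlam, ?_⟩
  rw [hRv]
  funext k
  simp [Pi.single_apply, Fin.ext_iff]
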